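/- arXiv:2104.12285 — 7 statements merged into one kernel-verified Lean document; each statement's English description precedes it below -/
import Mathlib

section
/- Let l be a list of length m with entries in a type with decidable equality, and let l' be obtained from l by a single move, i.e., by deleting the entry at some position i < m and reinserting it at some position j. Then for every list r, the longest common subsequence lengths satisfy |LCS(l', r) − LCS(l, r)| ≤ 1; in particular LCS(l', r) ≤ LCS(l, r) + 1. -/
/-- Longest common subsequence length. -/
noncomputable def LCS {α : Type*} [DecidableEq α] (a b : List α) : ℕ :=
  sSup {n | ∃ l : List α, l.Sublist a ∧ l.Sublist b ∧ l.length = n}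

/-- `l'` is obtained from `l` by a single move. -/
def IsMove {α : Type*} (l l' : List α) : Prop :=
  ∃ (i j : ℕ) (hi : i < l.length), j < l.length ∧
    l' = (l.eraseIdx i).insertIdx j (l.get ⟨i, hi⟩)

/-! A move deletes an entry and reinserts it, so `l` and `l'` have the common one-entry deletion
`e = l.eraseIdx i = l'.eraseIdx j`. Deleting an entry removes at most that entry from a common
subsequence, and `e` is a sublist of both, so `LCS e r ≤ LCS l r ≤ LCS e r + 1`, and likewise
for `l'`. -/

theorem List.Sublist.exists_sublist_eraseIdx {α : Type*} {s l : List α} (h : s.Sublist l)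
    (i : ℕ) :
    ∃ s' : List α, s'.Sublist (l.eraseIdx i) ∧ s'.Sublist s ∧ s.length ≤ s'.length + 1 := by
  induction h generalizing i with
  | slnil => exact ⟨[], .slnil, .slnil, by simp⟩
  | @cons s l a hs ih =>
    cases i with
    | zero => exact ⟨s, by simpa using hs, .refl s, by omega⟩
    | succ i =>
      obtain ⟨s', hs'l, hs's, hlen⟩ := ih i
      exact ⟨s', by simpa using hs'l.cons a, hs's, hlen⟩
  | @cons_cons s l a hs ih =>
    cases i with
    | zero => exact ⟨s, by simpa using hs, List.sublist_cons_self a s, by simp⟩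
    | succ i =>
      obtain ⟨s', hs'l, hs's, hlen⟩ := ih i
      exact ⟨a :: s', by simpa using hs'l.cons_cons a, hs's.cons_cons a, by simpa using hlen⟩

namespace LCS

variable {α : Type*}

theorem bddAbove (a b : List α) :
    BddAbove {n | ∃ l : List α, l.Sublist a ∧ l.Sublist b ∧ l.length = n} := by
  refine ⟨a.length, ?_⟩
  rintro _ ⟨t, hta, -, rfl⟩
  exact hta.length_le

variable [DecidableEq α]

theorem exists_sublist_length_eq (a b : List α) :
    ∃ t : List α, t.Sublist a ∧ t.Sublist b ∧ t.length = LCS a b :=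
  Nat.sSup_mem (s := {n | ∃ l : List α, l.Sublist a ∧ l.Sublist b ∧ l.length = n})
    ⟨0, [], List.nil_sublist a, List.nil_sublist b, rfl⟩ (bddAbove a b)

theorem length_le {a b t : List α} (hta : t.Sublist a) (htb : t.Sublist b) :
    t.length ≤ LCS a b :=
  le_csSup (bddAbove a b) ⟨t, hta, htb, rfl⟩

theorem mono_left {a a' : List α} (h : a.Sublist a') (b : List α) : LCS a b ≤ LCS a' b := by
  obtain ⟨t, hta, htb, hlen⟩ := exists_sublist_length_eq a b
  exact hlen ▸ length_le (hta.trans h) htb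

theorem le_eraseIdx_add_one (a b : List α) (i : ℕ) : LCS a b ≤ LCS (a.eraseIdx i) b + 1 := by
  obtain ⟨t, hta, htb, hlen⟩ := exists_sublist_length_eq a b
  obtain ⟨t', ht'a, ht't, hlen'⟩ := hta.exists_sublist_eraseIdx i
  have := length_le ht'a (ht't.trans htb)
  omega

theorem le_add_one_of_eraseIdx_eq {a a' : List α} {i i' : ℕ} (h : a.eraseIdx i = a'.eraseIdx i')
    (b : List α) : LCS a b ≤ LCS a' b + 1 := by
  calc LCS a b ≤ LCS (a.eraseIdx i) b + 1 := le_eraseIdx_add_one a b i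
    _ ≤ LCS a' b + 1 := by
      rw [h]
      exact Nat.add_le_add_right (mono_left (List.eraseIdx_sublist a' i') b) 1

end LCS

theorem lcs_move_diff_le_one_general {α : Type*} [DecidableEq α] (l l' : List α)
    (h : IsMove l l') (r : List α) :
    LCS l' r ≤ LCS l r + 1 ∧ LCS l r ≤ LCS l' r + 1 := by
  obtain ⟨i, j, hi, -, rfl⟩ := h
  have hshared : ((l.eraseIdx i).insertIdx j (l.get ⟨i, hi⟩)).eraseIdx j = l.eraseIdx i :=
    List.eraseIdx_insertIdx_self _
  exact ⟨LCS.le_add_one_of_eraseIdx_eq hshared r, LCS.le_add_one_of_eraseIdx_eq hshared.symm r⟩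

theorem lcs_move_diff_le_one {α : Type*} [DecidableEq α] (m : ℕ) (l l' : List α)
    (hm : l.length = m) (h : IsMove l l') (r : List α) :
    LCS l' r ≤ LCS l r + 1 ∧ LCS l r ≤ LCS l' r + 1 :=
  lcs_move_diff_le_one_general l l' h r
end

section
/- Let p and q be permutations of Fin m with words w_p and w_q, let L be a common subsequence of w_p and w_q, and let σ be an entry of w_p that does not occur in L. Then there is a single move applied to w_p producing a list w' such that w' and w_q have a common subsequence of length |L| + 1 whose entries are exactly the entries of L together with σ. -/
/-- The word of a permutation of `Fin m`. -/
def word {m : ℕ} (p : Equiv.Perm (Fin m)) : List (Fin m) :=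
  List.ofFn p

namespace List

theorem insertIdx_length_append {α : Type*} (c d : List α) (a : α) :
    (c ++ d).insertIdx c.length a = c ++ a :: d := by
  induction c with
  | nil => simp
  | cons x c ih => simpa [insertIdx_succ_cons] using ih

theorem Sublist.exists_append_of_notMem {α : Type*} {l u v : List α} {a : α}
    (h : l <+ u ++ a :: v) (ha : a ∉ l) : ∃ s t, l = s ++ t ∧ s <+ u ∧ t <+ v := by
  obtain ⟨s, t, rfl, hs, ht⟩ := sublist_append_iff.mp h
  refine ⟨s, t, rfl, hs, ?_⟩
  rcases sublist_cons_iff.mp ht with ht | ⟨r, rfl, -⟩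
  · exact ht
  · simp at ha

end List

theorem isMove_append_cons {α : Type*} {c d e₁ e₂ : List α} (a : α) (h : c ++ d = e₁ ++ e₂) :
    IsMove (c ++ a :: d) (e₁ ++ a :: e₂) := by
  refine ⟨c.length, e₁.length, by simp, ?_, ?_⟩
  · have hlen := congrArg List.length h
    simp only [List.length_append, List.length_cons] at hlen ⊢
    omega
  · simp [List.eraseIdx_append_of_length_le, h, List.insertIdx_length_append]

theorem mem_word {m : ℕ} (p : Equiv.Perm (Fin m)) (x : Fin m) : x ∈ word p :=
  List.mem_ofFn.mpr ⟨p.symm x, p.apply_symm_apply x⟩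

theorem exists_valid_move_general {m : ℕ} (p q : Equiv.Perm (Fin m)) (L : List (Fin m))
    (hLp : L.Sublist (word p)) (hLq : L.Sublist (word q))
    (σ : Fin m) (hσL : σ ∉ L) :
    ∃ w' : List (Fin m), IsMove (word p) w' ∧
      ∃ L' : List (Fin m), L'.Sublist w' ∧ L'.Sublist (word q) ∧
        L'.length = L.length + 1 ∧ L'.Perm (σ :: L) := by
  obtain ⟨c, d, hp⟩ := List.append_of_mem (mem_word p σ)
  obtain ⟨u, v, hq⟩ := List.append_of_mem (mem_word q σ)
  rw [hp] at hLp ⊢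
  rw [hq] at hLq ⊢
  obtain ⟨s, t, rfl, hsu, htv⟩ := hLq.exists_append_of_notMem hσL
  obtain ⟨s', t', hst, hsc, htd⟩ := hLp.exists_append_of_notMem hσL
  have hcd : (s ++ t).Sublist (c ++ d) := hst ▸ hsc.append htd
  obtain ⟨e₁, e₂, he, hse, hte⟩ := List.append_sublist_iff.mp hcd
  exact ⟨e₁ ++ σ :: e₂, isMove_append_cons σ he, s ++ σ :: t, hse.append (hte.cons_cons σ),
    hsu.append (htv.cons_cons σ), by simp [Nat.add_assoc], List.perm_middle⟩

theorem exists_valid_move {m : ℕ} (p q : Equiv.Perm (Fin m)) (L : List (Fin m))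
    (hLp : L.Sublist (word p)) (hLq : L.Sublist (word q))
    (σ : Fin m) (hσp : σ ∈ word p) (hσL : σ ∉ L) :
    ∃ w' : List (Fin m), IsMove (word p) w' ∧
      ∃ L' : List (Fin m), L'.Sublist w' ∧ L'.Sublist (word q) ∧
        L'.length = L.length + 1 ∧ L'.Perm (σ :: L) :=
  exists_valid_move_general p q L hLp hLq σ hσL
end

section
/- Let p and q be permutations of Fin m with words w_p and w_q. Then the minimum natural number d such that there exists a chain of lists l₀ = w_p, l₁, …, l_d = w_q, in which each l_{k+1} is obtained from l_k by a single move, equals m − LCS(w_p, w_q). -/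
/-!
A move deletes one entry, which cannot increase the LCS with a fixed word, and reinserts it,
which increases it by at most one. Since `LCS (word q) (word q) = m`, at least
`m - LCS (word p) (word q)` moves are needed. Conversely, let `s` be a common subsequence of the
current list `l` and of `word q` that is shorter than `m`. Some entry `x` of `word q` is missing
from `s`, and `word q` splits as `a ++ x :: b` with `s = s₁ ++ s₂`, `s₁ <+ a`, `s₂ <+ b`.
Since the entries are distinct, `x ∉ s`, so `s` survives deleting `x` from `l`; reinserting `x`
between the images of `s₁` and `s₂` gives the longer common subsequence `s₁ ++ x :: s₂`. Starting from a longest common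
subsequence of `word p` and `word q`, `m - LCS (word p) (word q)` such moves reach `word q`.
-/

section LCS

variable {α : Type*}

theorem LCS_set_nonempty (a b : List α) :
    {n | ∃ l : List α, l.Sublist a ∧ l.Sublist b ∧ l.length = n}.Nonempty :=
  ⟨0, [], List.nil_sublist _, List.nil_sublist _, rfl⟩

theorem LCS_set_bddAbove (a b : List α) :
    BddAbove {n | ∃ l : List α, l.Sublist a ∧ l.Sublist b ∧ l.length = n} :=
  ⟨a.length, fun _ ⟨_, ha, _, hn⟩ => hn ▸ ha.length_le⟩

variable [DecidableEq α]

theorem exists_common_sublist_length_eq_LCS (a b : List α) :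
    ∃ s : List α, s.Sublist a ∧ s.Sublist b ∧ s.length = LCS a b :=
  Nat.sSup_mem (LCS_set_nonempty a b) (LCS_set_bddAbove a b)

theorem length_le_LCS {a b s : List α} (ha : s.Sublist a) (hb : s.Sublist b) :
    s.length ≤ LCS a b :=
  le_csSup (LCS_set_bddAbove a b) ⟨s, ha, hb, rfl⟩

theorem LCS_le_length_left (a b : List α) : LCS a b ≤ a.length :=
  csSup_le (LCS_set_nonempty a b) fun _ ⟨_, ha, _, hn⟩ => hn ▸ ha.length_le

theorem LCS_self (a : List α) : LCS a a = a.length :=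
  (LCS_le_length_left a a).antisymm (length_le_LCS (.refl a) (.refl a))

theorem LCS_mono_left {a a' : List α} (h : a.Sublist a') (b : List α) : LCS a b ≤ LCS a' b := by
  obtain ⟨s, ha, hb, hs⟩ := exists_common_sublist_length_eq_LCS a b
  exact hs ▸ length_le_LCS (ha.trans h) hb

theorem LCS_append_cons_le (a b r : List α) (x : α) :
    LCS (a ++ x :: b) r ≤ LCS (a ++ b) r + 1 := by
  obtain ⟨s, hs, hr, hlen⟩ := exists_common_sublist_length_eq_LCS (a ++ x :: b) r
  obtain ⟨s₁, s₂, rfl, h₁, h₂⟩ := List.sublist_append_iff.1 hs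
  rw [← hlen]
  rcases List.sublist_cons_iff.1 h₂ with h₂ | ⟨t, rfl, ht⟩
  · exact (length_le_LCS (h₁.append h₂) hr).trans (Nat.le_succ _)
  · have hsub : (s₁ ++ t).Sublist (s₁ ++ x :: t) := (List.sublist_cons_self x t).append_left s₁
    have := length_le_LCS (h₁.append ht) (hsub.trans hr)
    simp only [List.length_append, List.length_cons] at this ⊢
    omega

end LCS

theorem List.insertIdx_length_append_s2 {α : Type*} (a b : List α) (x : α) :
    (a ++ b).insertIdx a.length x = a ++ x :: b := by
  induction a with
  | nil => simp
  | cons y a ih => simp [List.insertIdx_succ_cons, ih]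

theorem List.Sublist.exists_eq_append_cons_of_ne {α : Type*} {s t : List α} (h : s.Sublist t)
    (hne : s ≠ t) : ∃ (a b : List α) (x : α), t = a ++ x :: b ∧ s.Sublist (a ++ b) := by
  induction h with
  | slnil => exact absurd rfl hne
  | cons x h _ => exact ⟨[], _, x, rfl, h⟩
  | cons_cons x _ ih =>
    obtain ⟨a, b, y, rfl, h⟩ := ih fun he => hne (he ▸ rfl)
    exact ⟨x :: a, b, y, rfl, h.cons_cons x⟩

theorem List.Sublist.of_append_cons_of_notMem {α : Type*} {s a b : List α} {x : α}
    (h : s.Sublist (a ++ x :: b)) (hx : x ∉ s) : s.Sublist (a ++ b) := by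
  obtain ⟨s₁, s₂, rfl, h₁, h₂⟩ := List.sublist_append_iff.1 h
  rcases List.sublist_cons_iff.1 h₂ with h₂ | ⟨t, rfl, -⟩
  · exact h₁.append h₂
  · simp at hx

section Moves

variable {α : Type*}

theorem isMove_iff {l l' : List α} :
    IsMove l l' ↔ ∃ (a b c d : List α) (x : α),
      l = a ++ x :: b ∧ a ++ b = c ++ d ∧ l' = c ++ x :: d := by
  constructor
  · rintro ⟨i, j, hi, hj, rfl⟩
    set u := l.eraseIdx i with hu
    have hju : j ≤ u.length := by rw [hu, List.length_eraseIdx_of_lt hi]; omega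
    refine ⟨l.take i, l.drop (i + 1), u.take j, u.drop j, l[i], ?_, ?_, ?_⟩
    · rw [List.getElem_cons_drop, List.take_append_drop]
    · rw [List.take_append_drop, hu, List.eraseIdx_eq_take_drop_succ]
    · have hins := List.insertIdx_length_append_s2 (u.take j) (u.drop j) l[i]
      rwa [List.take_append_drop, List.length_take_of_le hju] at hins
  · rintro ⟨a, b, c, d, x, rfl, hab, rfl⟩
    have hlen := congrArg List.length hab
    simp only [List.length_append] at hlen
    refine ⟨a.length, c.length, by simp, by simp only [List.length_append, List.length_cons]; omega, ?_⟩
    simp [List.eraseIdx_append_of_length_le, hab, List.insertIdx_length_append_s2]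

theorem IsMove.perm {l l' : List α} (h : IsMove l l') : l'.Perm l := by
  obtain ⟨a, b, c, d, x, rfl, hab, rfl⟩ := isMove_iff.1 h
  exact List.perm_middle.trans (by rw [← hab]; exact List.perm_middle.symm)

theorem LCS_le_LCS_add_one_of_isMove [DecidableEq α] {l l' : List α} (h : IsMove l l')
    (r : List α) : LCS l' r ≤ LCS l r + 1 := by
  obtain ⟨a, b, c, d, x, rfl, hab, rfl⟩ := isMove_iff.1 h
  calc LCS (c ++ x :: d) r ≤ LCS (c ++ d) r + 1 := LCS_append_cons_le c d r x
    _ = LCS (a ++ b) r + 1 := by rw [hab]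
    _ ≤ LCS (a ++ x :: b) r + 1 :=
      Nat.add_le_add_right (LCS_mono_left ((List.sublist_cons_self x b).append_left a) r) 1

theorem LCS_le_LCS_add_of_moves [DecidableEq α] {c : ℕ → List α} {d : ℕ}
    (h : ∀ k < d, IsMove (c k) (c (k + 1))) (r : List α) : LCS (c d) r ≤ LCS (c 0) r + d := by
  induction d with
  | zero => exact le_rfl
  | succ d ih =>
    have hstep := LCS_le_LCS_add_one_of_isMove (h d d.lt_succ_self) r
    have hprev := ih fun k hk => h k (hk.trans d.lt_succ_self)
    omega

theorem exists_isMove_of_sublist {l s t : List α} (hl : l.Perm t) (ht : t.Nodup)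
    (hsl : s.Sublist l) (hst : s.Sublist t) (hne : s ≠ t) :
    ∃ l' s' : List α, IsMove l l' ∧ l'.Perm t ∧ s'.Sublist l' ∧ s'.Sublist t ∧
      s'.length = s.length + 1 := by
  obtain ⟨a, b, x, rfl, hsab⟩ := hst.exists_eq_append_cons_of_ne hne
  have hx : x ∉ s := fun hxs => (List.nodup_cons.1 (List.nodup_middle.1 ht)).1 (hsab.subset hxs)
  obtain ⟨c, e, rfl⟩ := List.append_of_mem (hl.mem_iff.2 (List.mem_append_right a List.mem_cons_self))
  obtain ⟨s₁, s₂, rfl, h₁, h₂⟩ := List.sublist_append_iff.1 hsab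
  obtain ⟨u₁, u₂, hu, hu₁, hu₂⟩ := List.append_sublist_iff.1 (hsl.of_append_cons_of_notMem hx)
  have hmove : IsMove (c ++ x :: e) (u₁ ++ x :: u₂) := isMove_iff.2 ⟨c, e, u₁, u₂, x, rfl, hu, rfl⟩
  exact ⟨_, s₁ ++ x :: s₂, hmove, hmove.perm.trans hl, hu₁.append (hu₂.cons_cons x),
    h₁.append (h₂.cons_cons x), by simp only [List.length_append, List.length_cons]; omega⟩

theorem exists_moves_of_sublist (n : ℕ) {l s t : List α} (hl : l.Perm t) (ht : t.Nodup)
    (hsl : s.Sublist l) (hst : s.Sublist t) (hlen : t.length = s.length + n) :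
    ∃ c : ℕ → List α, c 0 = l ∧ c n = t ∧ ∀ k < n, IsMove (c k) (c (k + 1)) := by
  induction n generalizing l s with
  | zero =>
    have hlt : l = t := (hsl.eq_of_length (by rw [hl.length_eq]; omega)).symm.trans
      (hst.eq_of_length (by omega))
    exact ⟨fun _ => l, rfl, hlt, fun k hk => absurd hk k.not_lt_zero⟩
  | succ n ih =>
    obtain ⟨l', s', hmove, hl', hsl', hst', hlen'⟩ :=
      exists_isMove_of_sublist hl ht hsl hst (by rintro rfl; omega)
    obtain ⟨c, hc0, hcn, hc⟩ := ih hl' hsl' hst' (by omega)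
    refine ⟨fun | 0 => l | k + 1 => c k, rfl, hcn, ?_⟩
    rintro (_ | k) hk
    · show IsMove l (c 0)
      rwa [hc0]
    · exact hc k (by omega)

end Moves

theorem length_word {m : ℕ} (p : Equiv.Perm (Fin m)) : (word p).length = m :=
  List.length_ofFn

theorem nodup_word {m : ℕ} (p : Equiv.Perm (Fin m)) : (word p).Nodup :=
  List.nodup_ofFn.2 p.injective

theorem word_perm {m : ℕ} (p q : Equiv.Perm (Fin m)) : (word p).Perm (word q) :=
  (List.perm_ext_iff_of_nodup (nodup_word p) (nodup_word q)).2 fun a => by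
    simp only [word, List.mem_ofFn]
    exact iff_of_true (p.surjective a) (q.surjective a)

theorem min_move_schedule_size {m : ℕ} (p q : Equiv.Perm (Fin m)) :
    IsLeast {d : ℕ | ∃ c : ℕ → List (Fin m), c 0 = word p ∧ c d = word q ∧
        ∀ k < d, IsMove (c k) (c (k + 1))}
      (m - LCS (word p) (word q)) := by
  have hLCS : LCS (word p) (word q) ≤ m := (LCS_le_length_left _ _).trans_eq (length_word p)
  constructor
  · obtain ⟨s, hsp, hsq, hs⟩ := exists_common_sublist_length_eq_LCS (word p) (word q)
    exact exists_moves_of_sublist _ (word_perm p q) (nodup_word q) hsp hsq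
      (by rw [length_word]; omega)
  · rintro d ⟨c, hc0, hcd, hc⟩
    have hbound := LCS_le_LCS_add_of_moves hc (word q)
    rw [hcd, hc0, LCS_self, length_word] at hbound
    omega
end

section
/- For any permutations p and q of Fin m, the longest common subsequence length of their words equals the longest strictly increasing subsequence length of the word of q⁻¹ ∘ p; that is, LCS(w_p, w_q) = LIS(w_{q⁻¹∘p}). -/
/-- Longest strictly increasing subsequence length. -/
noncomputable def LIS {α : Type*} [LinearOrder α] (l : List α) : ℕ :=
  sSup {n | ∃ s : List α, s.Sublist l ∧ s.Pairwise (· < ·) ∧ s.length = n}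

/-!
Relabel every letter `x` as `q⁻¹ x`. This bijection of the alphabet preserves the sublist
relation and lengths; it turns the word of `q` into `0, 1, …, m - 1`, whose sublists are exactly
the strictly increasing lists, and the word of `p` into the word of `q⁻¹ * p`. So the common
subsequences of the two words correspond to the increasing subsequences of the word of `q⁻¹ * p`.
-/

theorem List.sublist_map_equiv_iff {α β : Type*} (e : α ≃ β) {l : List β} {l' : List α} :
    l.Sublist (l'.map e) ↔ (l.map e.symm).Sublist l' := by
  constructor
  · intro h
    simpa [Function.comp_def] using h.map e.symm
  · intro h
    simpa [Function.comp_def] using h.map e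

theorem List.sublist_finRange_iff_pairwise {n : ℕ} {l : List (Fin n)} :
    l.Sublist (finRange n) ↔ l.Pairwise (· < ·) := by
  refine ⟨fun h => (pairwise_lt_finRange n).sublist h, fun h => ?_⟩
  refine sublist_of_subperm_of_pairwise ?_ h (pairwise_lt_finRange n)
  exact subperm_of_subset (h.imp ne_of_lt) fun x _ => mem_finRange x

theorem word_eq_map_finRange {m : ℕ} (p : Equiv.Perm (Fin m)) :
    word p = (List.finRange m).map p :=
  List.ofFn_eq_map

theorem word_mul {m : ℕ} (q p : Equiv.Perm (Fin m)) : word (q * p) = (word p).map q := by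
  simp [word, List.map_ofFn, Function.comp_def]

theorem sublist_word_iff_pairwise {m : ℕ} (q : Equiv.Perm (Fin m)) {l : List (Fin m)} :
    l.Sublist (word q) ↔ (l.map ⇑q⁻¹).Pairwise (· < ·) := by
  rw [word_eq_map_finRange, List.sublist_map_equiv_iff, List.sublist_finRange_iff_pairwise]
  rfl

theorem sublist_word_iff_map_inv {m : ℕ} (p q : Equiv.Perm (Fin m)) {l : List (Fin m)} :
    l.Sublist (word p) ↔ (l.map ⇑q⁻¹).Sublist (word (q⁻¹ * p)) := by
  rw [word_mul, List.sublist_map_equiv_iff]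
  simp [Equiv.Perm.inv_def, Function.comp_def]

theorem lcs_eq_lis_inv_comp {m : ℕ} (p q : Equiv.Perm (Fin m)) :
    LCS (word p) (word q) = LIS (word (q⁻¹ * p)) := by
  unfold LCS LIS
  congr 1
  ext n
  constructor
  · rintro ⟨l, hp, hq, rfl⟩
    exact ⟨l.map ⇑q⁻¹, (sublist_word_iff_map_inv p q).1 hp, (sublist_word_iff_pairwise q).1 hq,
      List.length_map _⟩
  · rintro ⟨s, hs, hinc, rfl⟩
    have hs_eq : (s.map q).map ⇑q⁻¹ = s := by simp
    refine ⟨s.map q, (sublist_word_iff_map_inv p q).2 ?_, (sublist_word_iff_pairwise q).2 ?_,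
      List.length_map _⟩ <;> rwa [hs_eq]
end

section
/- For all permutations p and q of Fin m, the Kendall tau distance and the Spearman footrule distance satisfy K(p, q) ≤ F(p, q) ≤ 2 · K(p, q). -/
/-!
The position of an item under `p` is the number of items that `p` ranks before it. Hence
`|p⁻¹ a - q⁻¹ a|` is at most the number of items `b` such that `p` and `q` order `a, b`
differently; summing over `a` counts each such discordant pair twice, so `F ≤ 2K`.

For `K ≤ F` we induct on `F`. If `p ≠ q`, then `σ = p⁻¹ * q` has a crossing pair of positions
`i < j` with `σ j ≤ i` and `j ≤ σ i`. Exchanging the items that `q` puts at `i` and `j` moves both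
towards their `p`-positions, so it lowers `F` by exactly `2 (j - i)`, while by the triangle
inequality `K` drops by at most the number of inversions of the transposition `(i j)`, which is
less than `2 (j - i)`.
-/

/-- The Kendall tau distance between two permutations of `Fin m`: the number of
pairs `i < j` such that exactly one of `p⁻¹ i < p⁻¹ j` and `q⁻¹ i < q⁻¹ j` holds. -/
def kendall {m : ℕ} (p q : Equiv.Perm (Fin m)) : ℕ :=
  (Finset.univ.filter fun ij : Fin m × Fin m =>
    ij.1 < ij.2 ∧ ¬((p⁻¹ ij.1 < p⁻¹ ij.2) ↔ (q⁻¹ ij.1 < q⁻¹ ij.2))).card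

/-- The Spearman footrule distance between two permutations of `Fin m`. -/
def spearman {m : ℕ} (p q : Equiv.Perm (Fin m)) : ℤ :=
  ∑ i : Fin m, |(((p⁻¹ i : Fin m) : ℕ) : ℤ) - (((q⁻¹ i : Fin m) : ℕ) : ℤ)|

open Finset Equiv

section Counting

variable {α β : Type*} [Fintype α] [LinearOrder β]

theorem two_mul_card_filter_lt_and {f : α → β} (hf : Function.Injective f)
    {P : α → α → Prop} [DecidableRel P] (hsymm : ∀ a b, P a b → P b a) (hirr : ∀ a, ¬P a a) :
    2 * #{x : α × α | f x.1 < f x.2 ∧ P x.1 x.2} = #{x : α × α | P x.1 x.2} := by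
  classical
  have hswap : #{x : α × α | f x.1 < f x.2 ∧ P x.1 x.2} =
      #{x : α × α | f x.2 < f x.1 ∧ P x.1 x.2} :=
    card_equiv (prodComm α α) fun x => by
      simp only [mem_filter, mem_univ, true_and, prodComm_apply, Prod.fst_swap, Prod.snd_swap]
      exact and_congr_right fun _ => ⟨hsymm _ _, hsymm _ _⟩
  rw [two_mul]
  nth_rw 2 [hswap]
  rw [← card_union_of_disjoint (disjoint_filter.2 fun x _ h1 h2 => lt_asymm h1.1 h2.1)]
  congr 1
  ext x
  simp only [mem_union, mem_filter, mem_univ, true_and]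
  refine ⟨by rintro (⟨-, h⟩ | ⟨-, h⟩) <;> exact h, fun h => ?_⟩
  have hne : f x.1 ≠ f x.2 := fun he => hirr x.1 (hf he ▸ h)
  rcases hne.lt_or_gt with hlt | hlt
  · exact Or.inl ⟨hlt, h⟩
  · exact Or.inr ⟨hlt, h⟩

theorem card_filter_prod_eq_sum (P : α → α → Prop) [DecidableRel P] :
    #{x : α × α | P x.1 x.2} = ∑ b, #{a | P a b} := by
  rw [card_filter, Fintype.sum_prod_type_right]
  simp only [card_filter]

omit [Fintype α] in
theorem abs_card_filter_sub_card_filter_le (s : Finset α) (P Q : α → Prop)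
    [DecidablePred P] [DecidablePred Q] :
    |(#(s.filter P) : ℤ) - #(s.filter Q)| ≤ #(s.filter fun a => ¬(P a ↔ Q a)) := by
  classical
  have key : ∀ (P Q : α → Prop) [DecidablePred P] [DecidablePred Q],
      #(s.filter P) ≤ #(s.filter Q) + #(s.filter fun a => ¬(P a ↔ Q a)) := fun P Q _ _ =>
    (card_le_card fun a => by simp only [mem_filter, mem_union]; tauto).trans (card_union_le _ _)
  have h1 := key P Q
  have h2 := key Q P
  simp only [Iff.comm (a := Q _)] at h2
  rw [abs_sub_le_iff]
  constructor <;> linarith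

theorem val_eq_card_filter_lt {n : ℕ} (e : α ≃ Fin n) (a : α) :
    (e a : ℕ) = #{b | e b < e a} := by
  rw [← Fin.card_Iio (e a)]
  exact (card_equiv e fun b => by simp).symm

end Counting

namespace Equiv.Perm

variable {n : ℕ}

theorem exists_apply_lt_self_of_ne_one {σ : Perm (Fin n)} (hσ : σ ≠ 1) : ∃ j, σ j < j := by
  by_contra! hle
  obtain ⟨t, ht⟩ : ∃ t, σ t ≠ t := by
    by_contra! h
    exact hσ (Equiv.ext h)
  have hsum : ∑ t : Fin n, (t : ℕ) < ∑ t, (σ t : ℕ) :=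
    sum_lt_sum (fun t _ => hle t)
      ⟨t, mem_univ _, lt_of_le_of_ne (hle t) (Fin.val_ne_of_ne ht.symm)⟩
  rw [Equiv.sum_comp σ (fun t => (t : ℕ))] at hsum
  exact lt_irrefl _ hsum

/-- Take `j` minimal with `σ j < j`: if no `i` works, `σ` maps `[σ j, j)` into itself, hence onto
itself, and then `σ j` has a preimage in `[σ j, j)` other than `j`. -/
theorem exists_crossing_of_ne_one {σ : Perm (Fin n)} (hσ : σ ≠ 1) :
    ∃ i j, i < j ∧ σ j ≤ i ∧ j ≤ σ i := by
  obtain ⟨j, hj, hmin⟩ := (univ.filter fun j => σ j < j).exists_min_image id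
    (by simpa [Finset.Nonempty] using exists_apply_lt_self_of_ne_one hσ)
  rw [mem_filter] at hj
  by_contra! hno
  have hmaps : (Ico (σ j) j).map σ.toEmbedding ⊆ Ico (σ j) j := by
    intro t ht
    obtain ⟨s, hs, rfl⟩ := mem_map.1 ht
    rw [mem_Ico] at hs ⊢
    have hs_le : s ≤ σ s :=
      not_lt.1 fun h => (hmin s (mem_filter.2 ⟨mem_univ _, h⟩)).not_gt hs.2
    exact ⟨hs.1.trans hs_le, hno s j hs.2 hs.1⟩
  have hmem : σ j ∈ (Ico (σ j) j).map σ.toEmbedding := by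
    rw [map_eq_of_subset hmaps]
    exact mem_Ico.2 ⟨le_rfl, hj.2⟩
  obtain ⟨s, hs, hsj⟩ := mem_map.1 hmem
  rw [σ.injective hsj, mem_Ico] at hs
  exact lt_irrefl _ hs.2

def inversions (σ : Perm (Fin n)) : ℕ := #{x : Fin n × Fin n | x.1 < x.2 ∧ σ x.2 < σ x.1}

theorem inversions_swap_le {i j : Fin n} (hij : i < j) :
    inversions (swap i j) ≤ 2 * ((j : ℕ) - i) :=
  calc inversions (swap i j) ≤ #(({i} ×ˢ Ioc i j) ∪ (Ico i j ×ˢ {j})) := by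
        refine card_le_card fun x hx => ?_
        obtain ⟨-, hlt, hinv⟩ := mem_filter.1 hx
        rw [swap_apply_def, swap_apply_def] at hinv
        simp only [mem_union, mem_product, mem_singleton, mem_Ioc, mem_Ico]
        simp only [Fin.lt_def, Fin.le_def, Fin.ext_iff] at hij hlt hinv ⊢
        split_ifs at hinv <;> omega
    _ ≤ 2 * ((j : ℕ) - i) := by
        refine (card_union_le _ _).trans ?_
        simp only [card_product, card_singleton, Fin.card_Ioc, Fin.card_Ico]
        omega

end Equiv.Perm

section KendallSpearman

variable {m : ℕ}

def Discordant (p q : Perm (Fin m)) (a b : Fin m) : Prop :=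
  ¬((p⁻¹ a < p⁻¹ b) ↔ (q⁻¹ a < q⁻¹ b))

instance (p q : Perm (Fin m)) : DecidableRel (Discordant p q) :=
  fun _ _ => inferInstanceAs (Decidable (¬_))

theorem Discordant.symm {p q : Perm (Fin m)} {a b : Fin m} (h : Discordant p q a b) :
    Discordant p q b a := by
  have hab : a ≠ b := by rintro rfl; simp [Discordant] at h
  have hp : p⁻¹ a ≠ p⁻¹ b := by simpa using hab
  have hq : q⁻¹ a ≠ q⁻¹ b := by simpa using hab
  unfold Discordant at h ⊢
  grind

theorem not_discordant_self (p q : Perm (Fin m)) (a : Fin m) : ¬Discordant p q a a := by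
  simp [Discordant]

theorem two_mul_kendall (p q : Perm (Fin m)) :
    2 * kendall p q = #{x : Fin m × Fin m | Discordant p q x.1 x.2} :=
  two_mul_card_filter_lt_and (P := Discordant p q) Function.injective_id
    (fun _ _ => Discordant.symm)
    (not_discordant_self p q)

theorem kendall_eq_inversions (p q : Perm (Fin m)) :
    kendall p q = (p⁻¹ * q).inversions := by
  have h := two_mul_card_filter_lt_and (P := Discordant p q) q⁻¹.injective
    (fun _ _ => Discordant.symm)
    (not_discordant_self p q)
  have hinv : #{x : Fin m × Fin m | q⁻¹ x.1 < q⁻¹ x.2 ∧ Discordant p q x.1 x.2} =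
      (p⁻¹ * q).inversions := by
    refine card_equiv (prodCongr q⁻¹ q⁻¹) fun x => ?_
    rw [mem_filter, mem_filter]
    simp only [Discordant, mem_univ, true_and, prodCongr_apply, Prod.map_fst, Prod.map_snd,
      Perm.mul_apply, Perm.coe_inv, apply_symm_apply]
    constructor
    · rintro ⟨hlt, hd⟩
      exact ⟨hlt, lt_of_le_of_ne (not_lt.1 fun h => hd (iff_of_true h hlt))
        (p.symm.injective.ne (q.symm.injective.ne_iff.1 hlt.ne'))⟩
    · rintro ⟨hlt, hgt⟩
      exact ⟨hlt, fun h => lt_asymm hgt (h.2 hlt)⟩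
  rw [← two_mul_kendall] at h
  omega

theorem kendall_triangle (p q r : Perm (Fin m)) : kendall p r ≤ kendall p q + kendall q r :=
  (card_le_card fun x => by simp only [mem_filter, mem_union, mem_univ, true_and]; tauto).trans
    (card_union_le _ _)

theorem kendall_mul_swap_le (q : Perm (Fin m)) {i j : Fin m} (hij : i < j) :
    kendall (q * swap i j) q ≤ 2 * ((j : ℕ) - i) := by
  rw [kendall_eq_inversions, mul_inv_rev, swap_inv, mul_assoc, inv_mul_cancel, mul_one]
  exact Perm.inversions_swap_le hij

theorem spearman_eq_spearman_mul_swap_add (p q : Perm (Fin m)) {i j : Fin m} (hij : i < j)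
    (hj : p⁻¹ (q j) ≤ i) (hi : j ≤ p⁻¹ (q i)) :
    spearman p q = spearman p (q * swap i j) + 2 * ((j : ℤ) - i) := by
  have hinv : ∀ z, (q * swap i j)⁻¹ z = swap i j (q⁻¹ z) := fun z => by simp
  have hq : ∀ k, q⁻¹ (q k) = k := fun k => by simp
  rw [← sub_eq_iff_eq_add', spearman, spearman, ← sum_sub_distrib,
    Fintype.sum_eq_add (q i) (q j) (q.injective.ne hij.ne)]
  · simp only [hinv, hq, swap_apply_left, swap_apply_right, abs_eq_max_neg]
    omega
  · intro z hz
    have hi' : q⁻¹ z ≠ i := fun h => hz.1 (by rw [← h]; simp)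
    have hj' : q⁻¹ z ≠ j := fun h => hz.2 (by rw [← h]; simp)
    rw [hinv, swap_apply_of_ne_of_ne hi' hj', sub_self]

theorem spearman_nonneg (p q : Perm (Fin m)) : 0 ≤ spearman p q :=
  sum_nonneg fun _ _ => abs_nonneg _

theorem spearman_le_two_kendall (p q : Perm (Fin m)) : spearman p q ≤ 2 * kendall p q :=
  calc spearman p q ≤ ∑ a, (#{b | Discordant p q b a} : ℤ) := by
        refine sum_le_sum fun a _ => ?_
        rw [val_eq_card_filter_lt p⁻¹ a, val_eq_card_filter_lt q⁻¹ a]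
        exact abs_card_filter_sub_card_filter_le _ _ _
    _ = 2 * kendall p q := by
        exact_mod_cast ((two_mul_kendall p q).trans (card_filter_prod_eq_sum _)).symm

theorem kendall_le_spearman (p q : Perm (Fin m)) : (kendall p q : ℤ) ≤ spearman p q := by
  by_cases hpq : p = q
  · simp [hpq, kendall, spearman]
  obtain ⟨i, j, hij, hj, hi⟩ := (p⁻¹ * q).exists_crossing_of_ne_one (by rwa [Ne, inv_mul_eq_one])
  have hF := spearman_eq_spearman_mul_swap_add p q hij hj hi
  have hK := kendall_mul_swap_le q hij
  have htri := kendall_triangle p (q * swap i j) q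
  have ih := kendall_le_spearman p (q * swap i j)
  omega
termination_by (spearman p q).toNat
decreasing_by
  have := spearman_nonneg p (q * swap i j)
  omega

end KendallSpearman

theorem kendall_le_spearman_le_two_kendall {m : ℕ} (p q : Equiv.Perm (Fin m)) :
    (kendall p q : ℤ) ≤ spearman p q ∧ spearman p q ≤ 2 * (kendall p q : ℤ) :=
  ⟨kendall_le_spearman p q, spearman_le_two_kendall p q⟩
end

section
/- For i ≤ j in Fin m, the Spearman footrule distance between the identity permutation ι and the move permutation m_{i,j} equals twice the displacement: F(ι, m_{i,j}) = 2·(j − i). -/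
/-- The underlying function of the move permutation `m_{i,j}` (for `i ≤ j`):
`i ↦ j` and `k ↦ k - 1` for `i < k ≤ j`, all other points fixed. -/
def moveFun {m : ℕ} (i j : Fin m) (k : Fin m) : Fin m :=
  if k = i then j
  else if i < k ∧ k ≤ j then ⟨k.val - 1, by have := k.isLt; omega⟩
  else k

/-- The inverse function of the move permutation `m_{i,j}` (for `i ≤ j`). -/
def moveInvFun {m : ℕ} (i j : Fin m) (k : Fin m) : Fin m :=
  if k = j then i
  else if h : i ≤ k ∧ k < j then
    ⟨k.val + 1, by have h2 := Fin.lt_def.mp h.2; have := j.isLt; omega⟩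
  else k

/-- The move permutation `m_{i,j}` for `i ≤ j`: the cyclic permutation sending
`i ↦ j` and `k ↦ k - 1` for every `k` with `i < k ≤ j`, fixing all other points
(and the identity if `¬ i ≤ j`). -/
def movePerm {m : ℕ} (i j : Fin m) : Equiv.Perm (Fin m) :=
  if hij : i ≤ j then
    { toFun := moveFun i j
      invFun := moveInvFun i j
      left_inv := by
        intro k
        have hjm := j.isLt
        have him := i.isLt
        have hkm := k.isLt
        unfold moveFun moveInvFun
        split_ifs <;>
          simp_all only [Fin.ext_iff, Fin.lt_def, Fin.le_def, not_and, not_le, not_lt] <;>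
          omega
      right_inv := by
        intro k
        have hjm := j.isLt
        have him := i.isLt
        have hkm := k.isLt
        unfold moveFun moveInvFun
        split_ifs <;>
          simp_all only [Fin.ext_iff, Fin.lt_def, Fin.le_def, not_and, not_le, not_lt] <;>
          omega }
  else 1

/-!
The inverse of `m_{i,j}` sends `j` to `i` and `k` to `k + 1` for `i ≤ k < j`, fixing everything
else: the point `j` contributes `j - i` to the footrule and each of the `j - i` points of `[i, j)`
contributes `1`.
-/

theorem spearman_one_left {m : ℕ} (p : Equiv.Perm (Fin m)) :
    spearman 1 p = ∑ k : Fin m, |((k : ℕ) : ℤ) - ((p⁻¹ k : Fin m) : ℕ)| := by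
  simp only [spearman, inv_one, Equiv.Perm.one_apply]

section Move

variable {m : ℕ} {i j : Fin m}

theorem movePerm_inv_apply (hij : i ≤ j) (k : Fin m) :
    (movePerm i j)⁻¹ k = moveInvFun i j k := by
  simp [movePerm, dif_pos hij, Equiv.Perm.inv_def]

theorem abs_sub_moveInvFun (hij : i ≤ j) (k : Fin m) :
    |((k : ℕ) : ℤ) - ((moveInvFun i j k : Fin m) : ℕ)| =
      (if k = j then ((j : ℕ) : ℤ) - (i : ℕ) else 0) + (if k ∈ Finset.Ico i j then 1 else 0) := by
  have hij' : (i : ℕ) ≤ j := hij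
  unfold moveInvFun
  by_cases hkj : k = j
  · subst hkj
    simp [abs_of_nonneg (sub_nonneg.mpr (Int.ofNat_le.mpr hij'))]
  · by_cases hk : i ≤ k ∧ k < j
    · simp only [hkj, hk, Finset.mem_Ico, if_false, if_true, and_self, zero_add]
      push_cast
      simp
    · simp [hkj, hk]

end Move

theorem spearman_movePerm {m : ℕ} (i j : Fin m) (hij : i ≤ j) :
    spearman (1 : Equiv.Perm (Fin m)) (movePerm i j) = 2 * ((j : ℤ) - (i : ℤ)) := by
  have hij' : (i : ℕ) ≤ j := hij
  rw [spearman_one_left]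
  simp only [movePerm_inv_apply hij, abs_sub_moveInvFun hij, Finset.sum_add_distrib,
    Finset.sum_ite_eq', Finset.mem_univ, if_true, Finset.sum_boole, Finset.filter_mem_eq_inter,
    Finset.univ_inter, Fin.card_Ico]
  push_cast [hij']
  ring
end

section
/- Let 𝔽 be a field and D an m × m matrix over 𝔽. If (R₁, V₁) and (R₂, V₂) are two valid decompositions of D, then for every column index j: the j-th column of R₁ is zero if and only if the j-th column of R₂ is zero, and when both are nonzero, low_{R₁}(j) = low_{R₂}(j). In other words, the persistence pairing determined by the low entries of R is independent of the choice of valid decomposition. -/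
open Matrix

/-- The lowest nonzero row index of column `j` of `R` (`none` if the column is zero). -/
def lowOpt {𝔽 : Type*} [Field 𝔽] [DecidableEq 𝔽] {m : ℕ}
    (R : Matrix (Fin m) (Fin m) 𝔽) (j : Fin m) : Option (Fin m) :=
  (Finset.univ.filter fun i => R i j ≠ 0).max

/-- `R` is reduced: distinct nonzero columns have distinct lowest nonzero entries. -/
def Reduced {𝔽 : Type*} [Field 𝔽] [DecidableEq 𝔽] {m : ℕ}
    (R : Matrix (Fin m) (Fin m) 𝔽) : Prop :=
  ∀ j k : Fin m, j ≠ k → (∃ i, R i j ≠ 0) → (∃ i, R i k ≠ 0) →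
    lowOpt R j ≠ lowOpt R k

/-- `(R, V)` is a valid decomposition of `D`: `R = D * V`, `V` upper triangular
and invertible, and `R` reduced. -/
def ValidDecomp {𝔽 : Type*} [Field 𝔽] [DecidableEq 𝔽] {m : ℕ}
    (D R V : Matrix (Fin m) (Fin m) 𝔽) : Prop :=
  R = D * V ∧ V.BlockTriangular id ∧ IsUnit V ∧ Reduced R

/-!
For a prefix `s` of the column indices, consider the lows of the nonzero vectors `D *ᵥ x` with `x`
supported on `s`. Multiplying `D` on the right by an invertible upper triangular `V` does not change
this set, because `V` and `V⁻¹` preserve the vectors supported on a prefix. For reduced `R` the set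
is exactly the set of lows of the nonzero columns of `R` indexed by `s`: in a combination of columns
with pairwise distinct lows, the largest low survives. Hence these sets depend only on `D`, and the
low of column `j` is the unique element of the set for the prefix `≤ j` that is missing from the
set for the prefix `< j`, or does not exist when column `j` is zero.
-/

open Function

section Low

variable {ι 𝔽 : Type*} [Fintype ι] [LinearOrder ι] [Zero 𝔽] [DecidableEq 𝔽] {v : ι → 𝔽}

def low (v : ι → 𝔽) : WithBot ι :=
  (Finset.univ.filter fun i => v i ≠ 0).max

theorem low_le_iff {b : WithBot ι} : low v ≤ b ↔ ∀ i : ι, b < i → v i = 0 := by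
  simp only [low, Finset.max_le_iff, Finset.mem_filter, Finset.mem_univ, true_and]
  exact forall_congr' fun i => not_imp_comm.trans (by rw [not_le])

theorem apply_eq_zero_of_low_lt {i : ι} (h : low v < i) : v i = 0 :=
  low_le_iff.1 le_rfl i h

theorem coe_le_low {i : ι} (h : v i ≠ 0) : (i : WithBot ι) ≤ low v :=
  Finset.le_max (by simpa using h)

theorem apply_ne_zero_of_low_eq {i : ι} (h : low v = i) : v i ≠ 0 := by
  simpa using Finset.mem_of_max h

theorem low_eq_bot_iff : low v = ⊥ ↔ v = 0 := by
  simp [low, Finset.max_eq_bot, Finset.filter_eq_empty_iff, funext_iff]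

end Low

theorem Matrix.BlockTriangular.support_mulVec_subset {ι R : Type*} [Fintype ι] [LinearOrder ι]
    [NonUnitalNonAssocSemiring R] {M : Matrix ι ι R} (hM : M.BlockTriangular id) {s : Set ι}
    (hs : IsLowerSet s) {x : ι → R} (hx : support x ⊆ s) : support (M *ᵥ x) ⊆ s := by
  intro i hi
  by_contra his
  refine hi (Finset.sum_eq_zero fun k _ => ?_)
  by_cases hk : k ∈ s
  · exact mul_eq_zero_of_left (hM (lt_of_not_ge fun hik => his (hs hik hk))) _
  · exact mul_eq_zero_of_right _ (notMem_support.1 (mt (@hx k) hk))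

section SpanLows

variable {ι κ 𝔽 : Type*} [Fintype ι] [Fintype κ] [LinearOrder κ] [DecidableEq 𝔽] {s : Set ι}

def spanLows [Semiring 𝔽] (D : Matrix κ ι 𝔽) (s : Set ι) : Set κ :=
  {i | ∃ x, support x ⊆ s ∧ low (D *ᵥ x) = i}

theorem spanLows_mul_subset [LinearOrder ι] [Semiring 𝔽] {D : Matrix κ ι 𝔽} {V : Matrix ι ι 𝔽}
    (hV : V.BlockTriangular id) (hs : IsLowerSet s) : spanLows (D * V) s ⊆ spanLows D s := by
  rintro i ⟨x, hx, hi⟩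
  exact ⟨V *ᵥ x, hV.support_mulVec_subset hs hx, by rw [mulVec_mulVec, hi]⟩

theorem spanLows_mul_eq [LinearOrder ι] [CommRing 𝔽] {D : Matrix κ ι 𝔽} {V : Matrix ι ι 𝔽}
    (hV : V.BlockTriangular id) (hVu : IsUnit V) (hs : IsLowerSet s) :
    spanLows (D * V) s = spanLows D s := by
  have := hVu.invertible
  refine (spanLows_mul_subset hV hs).antisymm ?_
  calc spanLows D s = spanLows (D * V * V⁻¹) s := by rw [mul_inv_cancel_right_of_invertible]
    _ ⊆ spanLows (D * V) s := spanLows_mul_subset (blockTriangular_inv_of_blockTriangular hV) hs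

end SpanLows

section ReducedMatrix

variable {𝔽 : Type*} [Field 𝔽] [DecidableEq 𝔽] {m : ℕ} {R : Matrix (Fin m) (Fin m) 𝔽}

theorem lowOpt_eq_low (R : Matrix (Fin m) (Fin m) 𝔽) (j : Fin m) : lowOpt R j = low (R.col j) :=
  rfl

theorem lowOpt_eq_none_iff {j : Fin m} : lowOpt R j = none ↔ ∀ i, R i j = 0 :=
  low_eq_bot_iff.trans funext_iff

theorem Reduced.eq_of_lowOpt_eq (hR : Reduced R) {j k i : Fin m} (hj : lowOpt R j = some i)
    (hk : lowOpt R k = some i) : j = k :=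
  by_contra fun hjk => hR j k hjk ⟨i, apply_ne_zero_of_low_eq (v := R.col j) hj⟩
    ⟨i, apply_ne_zero_of_low_eq (v := R.col k) hk⟩ (hj.trans hk.symm)

theorem Reduced.exists_lowOpt_eq_of_low_mulVec_eq (hR : Reduced R) {y : Fin m → 𝔽} {i : Fin m}
    (h : low (R *ᵥ y) = i) : ∃ k, y k ≠ 0 ∧ lowOpt R k = some i := by
  have term_eq_zero : ∀ k (i' : Fin m), (y k ≠ 0 → low (R.col k) < i') → R i' k * y k = 0 := by
    intro k i' hk
    by_cases hyk : y k = 0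
    · exact mul_eq_zero_of_right _ hyk
    · exact mul_eq_zero_of_left (apply_eq_zero_of_low_lt (hk hyk)) _
  have hy : y ≠ 0 := by
    rintro rfl
    rw [mulVec_zero, low_eq_bot_iff.2 rfl] at h
    exact WithBot.bot_ne_coe h
  obtain ⟨k₀, hk₀, hmax⟩ :=
    Finset.exists_max_image (Finset.univ.filter (y · ≠ 0)) (fun k => low (R.col k)) <| by
      obtain ⟨k, hk⟩ := Function.ne_iff.1 hy
      exact ⟨k, by simpa using hk⟩
  simp only [Finset.mem_filter, Finset.mem_univ, true_and] at hk₀ hmax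
  have hle : (i : WithBot (Fin m)) ≤ low (R.col k₀) := by
    rw [← h, low_le_iff]
    intro i' hi'
    simp only [mulVec, dotProduct]
    exact Finset.sum_eq_zero fun k _ => term_eq_zero k i' fun hk => (hmax k hk).trans_lt hi'
  obtain ⟨i₀, hi₀⟩ := WithBot.ne_bot_iff_exists.1 ((WithBot.bot_lt_coe i).trans_le hle).ne'
  -- every other column used by `y` has low `< i₀`: `≤` by the choice of `k₀`, `≠` as `R` is reduced
  have hentry : (R *ᵥ y) i₀ = R i₀ k₀ * y k₀ := by
    refine Finset.sum_eq_single k₀ (fun k _ hk => ?_) (absurd (Finset.mem_univ _))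
    exact term_eq_zero k i₀ fun hyk =>
      lt_of_le_of_ne (hi₀ ▸ hmax k hyk) fun hki₀ => hk (hR.eq_of_lowOpt_eq hki₀ hi₀.symm)
  have hge : (i₀ : WithBot (Fin m)) ≤ i := h ▸ coe_le_low
    (hentry ▸ mul_ne_zero (apply_ne_zero_of_low_eq (v := R.col k₀) hi₀.symm) hk₀)
  refine ⟨k₀, hk₀, ?_⟩
  rw [lowOpt_eq_low, ← hi₀, le_antisymm hge (hi₀ ▸ hle)]
  rfl

def columnLows (R : Matrix (Fin m) (Fin m) 𝔽) (s : Set (Fin m)) : Set (Fin m) :=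
  {i | ∃ k ∈ s, lowOpt R k = some i}

theorem Reduced.spanLows_eq_columnLows (hR : Reduced R) (s : Set (Fin m)) :
    spanLows R s = columnLows R s := by
  ext i
  constructor
  · rintro ⟨y, hy, hi⟩
    obtain ⟨k, hk, hlow⟩ := hR.exists_lowOpt_eq_of_low_mulVec_eq hi
    exact ⟨k, hy hk, hlow⟩
  · rintro ⟨k, hk, hlow⟩
    refine ⟨Pi.single k 1, Pi.support_single_subset.trans (Set.singleton_subset_iff.2 hk), ?_⟩
    rw [mulVec_single_one]
    exact hlow

theorem Reduced.lowOpt_eq_some_iff (hR : Reduced R) {j i : Fin m} :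
    lowOpt R j = some i ↔ i ∈ columnLows R (Set.Iic j) \ columnLows R (Set.Iio j) := by
  constructor
  · intro h
    refine ⟨⟨j, Set.mem_Iic.2 le_rfl, h⟩, ?_⟩
    rintro ⟨k, hk, hki⟩
    exact (hk : k < j).ne (hR.eq_of_lowOpt_eq hki h)
  · rintro ⟨⟨k, hk, hki⟩, hlt⟩
    obtain rfl : k = j := (hk : k ≤ j).eq_or_lt.resolve_right fun h => hlt ⟨k, h, hki⟩
    exact hki

theorem ValidDecomp.columnLows_eq_spanLows {D V : Matrix (Fin m) (Fin m) 𝔽}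
    (h : ValidDecomp D R V) {s : Set (Fin m)} (hs : IsLowerSet s) :
    columnLows R s = spanLows D s := by
  obtain ⟨rfl, hV, hVu, hR⟩ := h
  rw [← hR.spanLows_eq_columnLows, spanLows_mul_eq hV hVu hs]

theorem ValidDecomp.lowOpt_eq {D R₁ V₁ R₂ V₂ : Matrix (Fin m) (Fin m) 𝔽} (h₁ : ValidDecomp D R₁ V₁)
    (h₂ : ValidDecomp D R₂ V₂) (j : Fin m) : lowOpt R₁ j = lowOpt R₂ j := by
  refine Option.ext fun i => ?_
  rw [h₁.2.2.2.lowOpt_eq_some_iff, h₂.2.2.2.lowOpt_eq_some_iff,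
    h₁.columnLows_eq_spanLows (isLowerSet_Iic j), h₁.columnLows_eq_spanLows (isLowerSet_Iio j),
    h₂.columnLows_eq_spanLows (isLowerSet_Iic j), h₂.columnLows_eq_spanLows (isLowerSet_Iio j)]

end ReducedMatrix

theorem pairing_uniqueness {𝔽 : Type*} [Field 𝔽] [DecidableEq 𝔽] {m : ℕ}
    (D R₁ V₁ R₂ V₂ : Matrix (Fin m) (Fin m) 𝔽)
    (h₁ : ValidDecomp D R₁ V₁) (h₂ : ValidDecomp D R₂ V₂) :
    ∀ j : Fin m,
      ((∀ i, R₁ i j = 0) ↔ (∀ i, R₂ i j = 0)) ∧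
      ((∃ i, R₁ i j ≠ 0) → (∃ i, R₂ i j ≠ 0) → lowOpt R₁ j = lowOpt R₂ j) := by
  intro j
  have h := h₁.lowOpt_eq h₂ j
  exact ⟨by rw [← lowOpt_eq_none_iff, ← lowOpt_eq_none_iff, h], fun _ _ => h⟩
end
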